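/- Let n ≥ 1, g ≥ 2, and let M₁, …, M_{2g} ∈ SO(2n+1) be matrices each of the following form: the (2n+1)-st row and column equal (0, …, 0, 1), and for all 1 ≤ i, j ≤ n the (i,j)-th 2×2 block is of the form [[x, y],[−y, x]] for some real numbers x, y (depending on i, j and the matrix). Then the product of commutators ∏_{l=1}^{g} [M_{2l−1}, M_{2l}] is not a generic element of T. -/
import Mathlib


open Matrix Real

/-- Index `2i` (0-based; row `2i-1` in 1-based numbering) in `Fin (2n+1)`. -/
def ia {n : ℕ} (i : Fin n) : Fin (2*n+1) := ⟨2*i.val, by have := i.isLt; omega⟩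

/-- Index `2i+1` (0-based; row `2i` in 1-based numbering) in `Fin (2n+1)`. -/
def ib {n : ℕ} (i : Fin n) : Fin (2*n+1) := ⟨2*i.val+1, by have := i.isLt; omega⟩

/-- The last index `2n` in `Fin (2n+1)`. -/
def ilast (n : ℕ) : Fin (2*n+1) := ⟨2*n, by omega⟩

/-- Membership in SO(2n+1). -/
def SOodd (n : ℕ) (M : Matrix (Fin (2*n+1)) (Fin (2*n+1)) ℝ) : Prop :=
  M * Mᵀ = 1 ∧ M.det = 1

/-- The block-diagonal torus element `diag(R(θ₁), …, R(θₙ), 1)` of SO(2n+1). -/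
noncomputable def torusMat (n : ℕ) (θ : Fin n → ℝ) :
    Matrix (Fin (2*n+1)) (Fin (2*n+1)) ℝ :=
  Matrix.of fun r c =>
    if hr : r.val < 2*n then
      if c.val < 2*n then
        if r.val / 2 = c.val / 2 then
          if r.val % 2 = 0 then
            if c.val % 2 = 0 then Real.cos (θ ⟨r.val/2, by omega⟩)
            else -Real.sin (θ ⟨r.val/2, by omega⟩)
          else
            if c.val % 2 = 0 then Real.sin (θ ⟨r.val/2, by omega⟩)
            else Real.cos (θ ⟨r.val/2, by omega⟩)
        else 0
      else 0
    else if c.val < 2*n then 0 else 1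

/-- `(θ₁, …, θₙ)` is a generic torus element: its centralizer in SO(2n+1) is exactly
the torus, and the only `λ ∈ {-1,0,1}ⁿ` with `λ·θ ∈ 2πℤ` is `λ = 0`. -/
noncomputable def IsGeneric (n : ℕ) (θ : Fin n → ℝ) : Prop :=
  (∀ M, SOodd n M → M * torusMat n θ = torusMat n θ * M →
      ∃ φ : Fin n → ℝ, M = torusMat n φ) ∧
  (∀ lam : Fin n → ℤ, (∀ i, lam i = -1 ∨ lam i = 0 ∨ lam i = 1) →
      (∃ k : ℤ, ∑ i, (lam i : ℝ) * θ i = 2 * Real.pi * k) → ∀ i, lam i = 0)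

/-- Commutator of matrices: `[P,Q] = P Q P⁻¹ Q⁻¹`. -/
noncomputable def commMat (n : ℕ) (P Q : Matrix (Fin (2*n+1)) (Fin (2*n+1)) ℝ) :
    Matrix (Fin (2*n+1)) (Fin (2*n+1)) ℝ :=
  P * Q * P⁻¹ * Q⁻¹

/-- Realification of a complex n×n matrix into a (2n+1)×(2n+1) real matrix,
fixing the last coordinate. -/
noncomputable def realify (n : ℕ) (C : Matrix (Fin n) (Fin n) ℂ) :
    Matrix (Fin (2*n+1)) (Fin (2*n+1)) ℝ :=
  Matrix.of fun r c =>
    if hr : r.val < 2*n then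
      if hc : c.val < 2*n then
        if r.val % 2 = 0 then
          if c.val % 2 = 0 then (C ⟨r.val/2, by omega⟩ ⟨c.val/2, by omega⟩).re
          else -(C ⟨r.val/2, by omega⟩ ⟨c.val/2, by omega⟩).im
        else
          if c.val % 2 = 0 then (C ⟨r.val/2, by omega⟩ ⟨c.val/2, by omega⟩).im
          else (C ⟨r.val/2, by omega⟩ ⟨c.val/2, by omega⟩).re
      else 0
    else if c.val < 2*n then 0 else 1

section entries
variable {n : ℕ} (C : Matrix (Fin n) (Fin n) ℂ) (i j : Fin n)

lemma realify_aa : realify n C (ia i) (ia j) = (C i j).re := by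
  have hi := i.isLt; have hj := j.isLt
  simp only [realify, ia, of_apply]
  rw [dif_pos (by omega), dif_pos (by omega), if_pos (by omega), if_pos (by omega)]
  have h1 : 2 * i.val / 2 = i.val := by omega
  have h2 : 2 * j.val / 2 = j.val := by omega
  simp only [h1, h2, Fin.eta]

lemma realify_ab : realify n C (ia i) (ib j) = -(C i j).im := by
  have hi := i.isLt; have hj := j.isLt
  simp only [realify, ia, ib, of_apply]
  rw [dif_pos (by omega), dif_pos (by omega), if_pos (by omega), if_neg (by omega)]
  have h1 : 2 * i.val / 2 = i.val := by omega
  have h2 : (2 * j.val + 1) / 2 = j.val := by omega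
  simp only [h1, h2, Fin.eta]

lemma realify_ba : realify n C (ib i) (ia j) = (C i j).im := by
  have hi := i.isLt; have hj := j.isLt
  simp only [realify, ia, ib, of_apply]
  rw [dif_pos (by omega), dif_pos (by omega), if_neg (by omega), if_pos (by omega)]
  have h1 : (2 * i.val + 1) / 2 = i.val := by omega
  have h2 : 2 * j.val / 2 = j.val := by omega
  simp only [h1, h2, Fin.eta]

lemma realify_bb : realify n C (ib i) (ib j) = (C i j).re := by
  have hi := i.isLt; have hj := j.isLt
  simp only [realify, ib, of_apply]
  rw [dif_pos (by omega), dif_pos (by omega), if_neg (by omega), if_neg (by omega)]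
  have h1 : (2 * i.val + 1) / 2 = i.val := by omega
  have h2 : (2 * j.val + 1) / 2 = j.val := by omega
  simp only [h1, h2, Fin.eta]

lemma realify_al : realify n C (ia i) (ilast n) = 0 := by
  have hi := i.isLt
  simp only [realify, ia, ilast, of_apply]
  rw [dif_pos (by omega), dif_neg (by omega)]

lemma realify_bl : realify n C (ib i) (ilast n) = 0 := by
  have hi := i.isLt
  simp only [realify, ib, ilast, of_apply]
  rw [dif_pos (by omega), dif_neg (by omega)]

lemma realify_la : realify n C (ilast n) (ia i) = 0 := by
  have hi := i.isLt
  simp only [realify, ia, ilast, of_apply]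
  rw [dif_neg (by omega), if_pos (by omega)]

lemma realify_lb : realify n C (ilast n) (ib i) = 0 := by
  have hi := i.isLt
  simp only [realify, ib, ilast, of_apply]
  rw [dif_neg (by omega), if_pos (by omega)]

lemma realify_ll : realify n C (ilast n) (ilast n) = 1 := by
  simp only [realify, ilast, of_apply]
  rw [dif_neg (by omega), if_neg (by omega)]

end entries

lemma fin_cases3 {n : ℕ} (r : Fin (2*n+1)) :
    (∃ i, r = ia i) ∨ (∃ i, r = ib i) ∨ r = ilast n := by
  rcases Nat.lt_or_ge r.val (2*n) with h | h
  · rcases Nat.even_or_odd r.val with ⟨m, hm⟩ | ⟨m, hm⟩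
    · exact Or.inl ⟨⟨m, by omega⟩, Fin.ext (by simp [ia]; omega)⟩
    · exact Or.inr (Or.inl ⟨⟨m, by omega⟩, Fin.ext (by simp [ib]; omega)⟩)
  · exact Or.inr (Or.inr (Fin.ext (by have := r.isLt; simp [ilast]; omega)))

def pairEquiv (m : ℕ) : (Fin m × Bool) ≃ Fin (2*m) where
  toFun x := ⟨2*x.1.val + (if x.2 then 1 else 0), by have := x.1.isLt; rcases x.2 <;> simp <;> omega⟩
  invFun k := (⟨k.val/2, by have := k.isLt; omega⟩, decide (k.val % 2 = 1))
  left_inv := by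
    rintro ⟨i, b⟩
    rcases b <;> refine Prod.ext_iff.mpr ⟨Fin.ext ?_, ?_⟩ <;> simp <;> omega
  right_inv := by
    intro k
    apply Fin.ext
    simp only []
    rcases Nat.even_or_odd k.val with ⟨m, hm⟩ | ⟨m, hm⟩
    · have h1 : k.val % 2 = 0 := by omega
      simp [h1]; omega
    · have h1 : k.val % 2 = 1 := by omega
      simp [h1]; omega

lemma sum_fin_split {n : ℕ} (f : Fin (2*n+1) → ℝ) :
    ∑ k, f k = (∑ i : Fin n, (f (ia i) + f (ib i))) + f (ilast n) := by
  have h : ∑ k : Fin (2*n+1), f k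
      = (∑ k : Fin (2*n), f (Fin.castSucc k)) + f (Fin.last (2*n)) :=
    Fin.sum_univ_castSucc f
  rw [h]
  congr 1
  · rw [← Equiv.sum_comp (pairEquiv n) (fun k => f (Fin.castSucc k)), Fintype.sum_prod_type]
    refine Finset.sum_congr rfl fun i _ => ?_
    rw [Fintype.sum_bool]
    have e1 : Fin.castSucc (pairEquiv n (i, true)) = ib i := Fin.ext (by simp [pairEquiv, ib])
    have e2 : Fin.castSucc (pairEquiv n (i, false)) = ia i := Fin.ext (by simp [pairEquiv, ia])
    rw [e1, e2, add_comm]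

lemma realify_mul {n : ℕ} (C D : Matrix (Fin n) (Fin n) ℂ) :
    realify n C * realify n D = realify n (C * D) := by
  ext r c
  rw [Matrix.mul_apply, sum_fin_split]
  rcases fin_cases3 r with ⟨i, rfl⟩ | ⟨i, rfl⟩ | rfl <;>
    rcases fin_cases3 c with ⟨j, rfl⟩ | ⟨j, rfl⟩ | rfl <;>
    simp only [realify_aa, realify_ab, realify_ba, realify_bb, realify_al, realify_bl,
      realify_la, realify_lb, realify_ll, Matrix.mul_apply, Complex.re_sum, Complex.im_sum,
      mul_zero, zero_mul, add_zero, zero_add, mul_one, one_mul, neg_zero,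
      Finset.sum_const_zero, Finset.sum_neg_distrib] <;>
    try rfl
  · exact Finset.sum_congr rfl fun t _ => by rw [Complex.mul_re]; ring
  · rw [← Finset.sum_neg_distrib]
    exact Finset.sum_congr rfl fun t _ => by rw [Complex.mul_im]; ring
  · exact Finset.sum_congr rfl fun t _ => by rw [Complex.mul_im]; ring
  · exact Finset.sum_congr rfl fun t _ => by rw [Complex.mul_re]; ring

@[simp] lemma ia_eq_ia {n : ℕ} {i j : Fin n} : (ia i = ia j) ↔ i = j := by
  simp only [ia, Fin.ext_iff]; omega
@[simp] lemma ib_eq_ib {n : ℕ} {i j : Fin n} : (ib i = ib j) ↔ i = j := by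
  simp only [ib, Fin.ext_iff]; omega
@[simp] lemma ia_ne_ib {n : ℕ} {i j : Fin n} : ia i ≠ ib j := by
  intro h; have := congrArg Fin.val h; simp only [ia, ib] at this; omega
@[simp] lemma ib_ne_ia {n : ℕ} {i j : Fin n} : ib i ≠ ia j := by
  intro h; have := congrArg Fin.val h; simp only [ia, ib] at this; omega
@[simp] lemma ia_ne_ilast {n : ℕ} {i : Fin n} : ia i ≠ ilast n := by
  have := i.isLt; simp only [ia, ilast, Fin.ext_iff, ne_eq]; omega
@[simp] lemma ib_ne_ilast {n : ℕ} {i : Fin n} : ib i ≠ ilast n := by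
  have := i.isLt; simp only [ib, ilast, Fin.ext_iff, ne_eq]; omega
@[simp] lemma ilast_ne_ia {n : ℕ} {i : Fin n} : ilast n ≠ ia i := by
  have := i.isLt; simp only [ia, ilast, Fin.ext_iff, ne_eq]; omega
@[simp] lemma ilast_ne_ib {n : ℕ} {i : Fin n} : ilast n ≠ ib i := by
  have := i.isLt; simp only [ib, ilast, Fin.ext_iff, ne_eq]; omega

lemma realify_one {n : ℕ} : realify n (1 : Matrix (Fin n) (Fin n) ℂ) = 1 := by
  ext r c
  rcases fin_cases3 r with ⟨i, rfl⟩ | ⟨i, rfl⟩ | rfl <;>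
    rcases fin_cases3 c with ⟨j, rfl⟩ | ⟨j, rfl⟩ | rfl <;>
    simp only [realify_aa, realify_ab, realify_ba, realify_bb, realify_al, realify_bl,
      realify_la, realify_lb, realify_ll, Matrix.one_apply, apply_ite Complex.re,
      apply_ite Complex.im, Complex.one_re, Complex.one_im, Complex.zero_re, Complex.zero_im,
      ia_eq_ia, ib_eq_ib, ia_ne_ib, ib_ne_ia, ia_ne_ilast, ib_ne_ilast, ilast_ne_ia,
      ilast_ne_ib, if_false, if_true, neg_zero, ite_self, eq_self_iff_true] <;>
    simp

lemma realify_inj {n : ℕ} {C D : Matrix (Fin n) (Fin n) ℂ}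
    (h : realify n C = realify n D) : C = D := by
  ext i j
  have h1 := congrFun (congrFun h (ia i)) (ia j)
  have h2 := congrFun (congrFun h (ib i)) (ia j)
  rw [realify_aa, realify_aa] at h1
  rw [realify_ba, realify_ba] at h2
  exact Complex.ext h1 h2

lemma realify_transpose {n : ℕ} (C : Matrix (Fin n) (Fin n) ℂ) :
    (realify n C)ᵀ = realify n Cᴴ := by
  ext r c
  rw [Matrix.transpose_apply]
  rcases fin_cases3 r with ⟨i, rfl⟩ | ⟨i, rfl⟩ | rfl <;>
    rcases fin_cases3 c with ⟨j, rfl⟩ | ⟨j, rfl⟩ | rfl <;>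
    simp only [realify_aa, realify_ab, realify_ba, realify_bb, realify_al, realify_bl,
      realify_la, realify_lb, realify_ll, Matrix.conjTranspose_apply, Complex.star_def,
      Complex.conj_re, Complex.conj_im] <;> ring

lemma realify_list_prod {n : ℕ} {α : Type*} (L : List α)
    (F : α → Matrix (Fin n) (Fin n) ℂ) :
    (L.map fun a => realify n (F a)).prod = realify n ((L.map F).prod) := by
  induction L with
  | nil => simp [realify_one]
  | cons a t ih => simp only [List.map_cons, List.prod_cons, ih, realify_mul]

lemma torus_eq {n : ℕ} (θ : Fin n → ℝ) :
    torusMat n θ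
      = realify n (Matrix.diagonal fun i => Complex.exp ((θ i : ℂ) * Complex.I)) := by
  ext r c
  simp only [torusMat, realify, of_apply, Matrix.diagonal_apply]
  by_cases hr : r.val < 2*n
  · rw [dif_pos hr, dif_pos hr]
    by_cases hc : c.val < 2*n
    · rw [if_pos hc, dif_pos hc]
      by_cases hd : r.val / 2 = c.val / 2
      · rw [if_pos hd]
        have he : (⟨r.val/2, by omega⟩ : Fin n) = ⟨c.val/2, by omega⟩ := Fin.ext hd
        split_ifs <;>
          simp [he, Complex.exp_ofReal_mul_I_re, Complex.exp_ofReal_mul_I_im, ← hd]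
      · rw [if_neg hd]
        have he : (⟨r.val/2, by omega⟩ : Fin n) ≠ (⟨c.val/2, by omega⟩ : Fin n) :=
          fun h => hd (congrArg Fin.val h)
        split_ifs <;> simp [he]
    · rw [if_neg hc, dif_neg hc]
  · rw [dif_neg hr, dif_neg hr]

theorem stmt2 (n g : ℕ) (hn : 1 ≤ n) (hg : 2 ≤ g)
    (M : Fin (2*g) → Matrix (Fin (2*n+1)) (Fin (2*n+1)) ℝ)
    (hSO : ∀ l, SOodd n (M l))
    (hlast : ∀ l, M l (ilast n) (ilast n) = 1 ∧
      ∀ r : Fin (2*n+1), r ≠ ilast n → M l r (ilast n) = 0 ∧ M l (ilast n) r = 0)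
    (hblock : ∀ l (i j : Fin n), ∃ x y : ℝ,
      M l (ia i) (ia j) = x ∧ M l (ia i) (ib j) = y ∧
      M l (ib i) (ia j) = -y ∧ M l (ib i) (ib j) = x)
    (θ : Fin n → ℝ) (hgen : IsGeneric n θ) :
    ((List.finRange g).map (fun l =>
        commMat n (M ⟨2*l.val, by have := l.isLt; omega⟩)
                  (M ⟨2*l.val+1, by have := l.isLt; omega⟩))).prod
      ≠ torusMat n θ := by
  intro h
  -- complex lifts of the matrices M l
  set CM : Fin (2*g) → Matrix (Fin n) (Fin n) ℂ := fun l =>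
    Matrix.of fun i j => Complex.mk (M l (ia i) (ia j)) (-(M l (ia i) (ib j))) with hCM
  have hM : ∀ l, M l = realify n (CM l) := by
    intro l
    ext r c
    rcases fin_cases3 r with ⟨i, rfl⟩ | ⟨i, rfl⟩ | rfl <;>
      rcases fin_cases3 c with ⟨j, rfl⟩ | ⟨j, rfl⟩ | rfl
    · rw [realify_aa]; rfl
    · rw [realify_ab]; simp [hCM]
    · rw [realify_al]; exact ((hlast l).2 _ ia_ne_ilast).1
    · obtain ⟨x, y, h1, h2, h3, h4⟩ := hblock l i j
      rw [realify_ba, h3]; simp [hCM, h2]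
    · obtain ⟨x, y, h1, h2, h3, h4⟩ := hblock l i j
      rw [realify_bb, h4]; simp [hCM, h1]
    · rw [realify_bl]; exact ((hlast l).2 _ ib_ne_ilast).1
    · rw [realify_la]; exact ((hlast l).2 _ (Ne.symm ilast_ne_ia)).2
    · rw [realify_lb]; exact ((hlast l).2 _ (Ne.symm ilast_ne_ib)).2
    · rw [realify_ll]; exact (hlast l).1
  have hU : ∀ l, CM l * (CM l)ᴴ = 1 := by
    intro l
    apply realify_inj
    rw [← realify_mul, ← realify_transpose, ← hM l, realify_one]
    exact (hSO l).1
  have hinv : ∀ l, (M l)⁻¹ = realify n ((CM l)ᴴ) :=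
    fun l => Matrix.inv_eq_right_inv
      (by rw [← realify_transpose, ← hM l]; exact (hSO l).1)
  -- complex commutators
  set K : Fin g → Matrix (Fin n) (Fin n) ℂ := fun l =>
    CM ⟨2*l.val, by have := l.isLt; omega⟩ * CM ⟨2*l.val+1, by have := l.isLt; omega⟩ *
    (CM ⟨2*l.val, by have := l.isLt; omega⟩)ᴴ *
    (CM ⟨2*l.val+1, by have := l.isLt; omega⟩)ᴴ with hK
  have hcomm : ∀ l : Fin g,
      commMat n (M ⟨2*l.val, by have := l.isLt; omega⟩)
                (M ⟨2*l.val+1, by have := l.isLt; omega⟩) = realify n (K l) := by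
    intro l
    rw [commMat, hinv, hinv, hM, hM, realify_mul, realify_mul, realify_mul, hK]
  have hprod :
      ((List.finRange g).map (fun l =>
        commMat n (M ⟨2*l.val, by have := l.isLt; omega⟩)
                  (M ⟨2*l.val+1, by have := l.isLt; omega⟩))).prod
        = realify n (((List.finRange g).map K).prod) := by
    rw [funext hcomm]
    exact realify_list_prod _ _
  have hPD : ((List.finRange g).map K).prod
      = Matrix.diagonal fun i => Complex.exp ((θ i : ℂ) * Complex.I) :=
    realify_inj (by rw [← hprod, h, torus_eq])
  -- determinants
  have hdetK : ∀ l : Fin g, (K l).det = 1 := by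
    intro l
    have h1 : (CM ⟨2*l.val, by have := l.isLt; omega⟩).det *
        ((CM ⟨2*l.val, by have := l.isLt; omega⟩)ᴴ).det = 1 := by
      rw [← Matrix.det_mul, hU]; simp
    have h2 : (CM ⟨2*l.val+1, by have := l.isLt; omega⟩).det *
        ((CM ⟨2*l.val+1, by have := l.isLt; omega⟩)ᴴ).det = 1 := by
      rw [← Matrix.det_mul, hU]; simp
    calc (K l).det
        = ((CM ⟨2*l.val, by have := l.isLt; omega⟩).det *
            ((CM ⟨2*l.val, by have := l.isLt; omega⟩)ᴴ).det) *
          ((CM ⟨2*l.val+1, by have := l.isLt; omega⟩).det *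
            ((CM ⟨2*l.val+1, by have := l.isLt; omega⟩)ᴴ).det) := by
          rw [hK]; simp only [Matrix.det_mul]; ring
      _ = 1 := by rw [h1, h2, one_mul]
  have hdetP : (((List.finRange g).map K).prod).det = 1 := by
    rw [show (((List.finRange g).map K).prod).det
        = (((List.finRange g).map K).map Matrix.det).prod from
      map_list_prod (Matrix.detMonoidHom) _]
    apply List.prod_eq_one
    intro x hx
    rw [List.map_map, List.mem_map] at hx
    obtain ⟨l, _, rfl⟩ := hx
    exact hdetK l
  have hdetD : (Matrix.diagonal fun i => Complex.exp ((θ i : ℂ) * Complex.I)).det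
      = Complex.exp ((↑(∑ i, θ i) : ℂ) * Complex.I) := by
    rw [Matrix.det_diagonal, ← Complex.exp_sum]
    congr 1
    rw [← Finset.sum_mul]
    push_cast
    ring
  have hone : Complex.exp ((↑(∑ i, θ i) : ℂ) * Complex.I) = 1 := by
    rw [← hdetD, ← hPD, hdetP]
  rw [Complex.exp_eq_one_iff] at hone
  obtain ⟨k, hk⟩ := hone
  have hsum : ∑ i, θ i = 2 * Real.pi * k := by
    have : ((∑ i, θ i : ℝ) : ℂ) = ((2 * Real.pi * k : ℝ) : ℂ) := by
      apply mul_right_cancel₀ Complex.I_ne_zero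
      rw [hk]; push_cast; ring
    exact_mod_cast this
  have := hgen.2 (fun _ => 1) (fun i => Or.inr (Or.inr rfl))
    ⟨k, by simpa using hsum⟩ ⟨0, hn⟩
  exact one_ne_zero this
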